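/- arXiv:1905.13423 — 2 statements merged into one kernel-verified Lean document; each statement's English description precedes it below -/
import Mathlib

section
/- Let s > 0, I_L > 0, and define π_F(I_F) = (1/(9 I_L^2) - s) I_F^2 + (2/(9 I_L)) I_F + 1/9 on the domain [0, I_L]. Then π_F attains its maximum on [0, I_L] uniquely at I_F* = I_L/(9 I_L^2 s - 1) if I_L > √(2/(9s)), and at I_F* = I_L if 0 < I_L ≤ √(2/(9s)). -/
/-!
Write `π_F x = a x² + b x + c` with `a = (1 - 9 I_L² s) / (9 I_L²)` and `b = 2 / (9 I_L) > 0`.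
If `9 I_L² s > 2` then `a < 0`, and the unique global maximiser is the vertex `-b / (2a)`, which
equals `I_L / (9 I_L² s - 1)`. If `9 I_L² s ≤ 2` then the derivative `2 a I_L + b` at the right
endpoint is still nonnegative, so `π_F` is strictly increasing on `[0, I_L]`.
-/

open Set

section Quadratic

variable {a b c : ℝ}

theorem quadratic_sub_quadratic_vertex (ha : a ≠ 0) (x : ℝ) :
    (a * x ^ 2 + b * x + c) - (a * (-b / (2 * a)) ^ 2 + b * (-b / (2 * a)) + c) =
      a * (x - -b / (2 * a)) ^ 2 := by
  field_simp
  ring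

theorem isMaxOn_quadratic_vertex (ha : a < 0) (s : Set ℝ) :
    IsMaxOn (fun x => a * x ^ 2 + b * x + c) s (-b / (2 * a)) := fun x _ => by
  have := quadratic_sub_quadratic_vertex (b := b) (c := c) ha.ne x
  simp only [mem_ofPred_eq]
  nlinarith [sq_nonneg (x - -b / (2 * a))]

theorem quadratic_eq_quadratic_vertex_iff (ha : a ≠ 0) {x : ℝ} :
    a * x ^ 2 + b * x + c = a * (-b / (2 * a)) ^ 2 + b * (-b / (2 * a)) + c ↔
      x = -b / (2 * a) := by
  rw [← sub_eq_zero, quadratic_sub_quadratic_vertex ha, mul_eq_zero, pow_eq_zero_iff two_ne_zero,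
    sub_eq_zero, or_iff_right ha]

theorem strictMonoOn_quadratic_Icc {u : ℝ} (hb : 0 < b) (hu : 0 ≤ 2 * a * u + b) :
    StrictMonoOn (fun x => a * x ^ 2 + b * x + c) (Icc 0 u) := by
  intro x hx y hy hxy
  have hslope : 0 < a * (x + y) + b := by
    rcases le_or_gt 0 a with ha | ha
    · nlinarith [hx.1, hy.1]
    · nlinarith [hx.2, hy.2]
  have hdiff : (a * y ^ 2 + b * y + c) - (a * x ^ 2 + b * x + c) = (y - x) * (a * (x + y) + b) := by
    ring
  nlinarith [mul_pos (sub_pos.2 hxy) hslope]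

end Quadratic

theorem MonotoneOn.isMaxOn_Icc_right {α β : Type*} [Preorder α] [Preorder β] {f : α → β} {l u : α}
    (hf : MonotoneOn f (Icc l u)) :
    IsMaxOn f (Icc l u) u :=
  fun _ hx => hf hx (right_mem_Icc.2 (hx.1.trans hx.2)) hx.2

theorem stmt6 (s IL : ℝ) (hs : 0 < s) (hIL : 0 < IL)
    (πF : ℝ → ℝ)
    (hπ : ∀ x, πF x = (1 / (9 * IL ^ 2) - s) * x ^ 2 + (2 / (9 * IL)) * x + 1 / 9) :
    (IL > Real.sqrt (2 / (9 * s)) →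
      IsMaxOn πF (Icc 0 IL) (IL / (9 * IL ^ 2 * s - 1)) ∧
      ∀ x ∈ Icc (0 : ℝ) IL, πF x = πF (IL / (9 * IL ^ 2 * s - 1)) →
        x = IL / (9 * IL ^ 2 * s - 1)) ∧
    (IL ≤ Real.sqrt (2 / (9 * s)) →
      IsMaxOn πF (Icc 0 IL) IL ∧
      ∀ x ∈ Icc (0 : ℝ) IL, πF x = πF IL → x = IL) := by
  obtain rfl : πF = fun x => (1 / (9 * IL ^ 2) - s) * x ^ 2 + (2 / (9 * IL)) * x + 1 / 9 :=
    funext hπ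
  have hsqrt : Real.sqrt (2 / (9 * s)) < IL ↔ 2 < 9 * IL ^ 2 * s := by
    rw [Real.sqrt_lt' hIL, div_lt_iff₀ (by positivity)]
    constructor <;> intro h <;> linarith
  constructor
  · intro h
    have h2 := hsqrt.1 h
    have ha : 1 / (9 * IL ^ 2) - s < 0 := by
      rw [sub_neg, div_lt_iff₀ (by positivity)]
      linarith
    have hvertex : -(2 / (9 * IL)) / (2 * (1 / (9 * IL ^ 2) - s)) = IL / (9 * IL ^ 2 * s - 1) := by
      rw [div_eq_div_iff (by linarith) (by linarith)]
      field_simp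
      ring
    rw [← hvertex]
    exact ⟨isMaxOn_quadratic_vertex ha _, fun x _ => (quadratic_eq_quadratic_vertex_iff ha.ne).1⟩
  · intro h
    have h2 : 9 * IL ^ 2 * s ≤ 2 := not_lt.1 (hsqrt.not.1 h.not_gt)
    have hmono := strictMonoOn_quadratic_Icc (a := 1 / (9 * IL ^ 2) - s) (b := 2 / (9 * IL))
      (c := 1 / 9) (u := IL) (by positivity) (by field_simp; nlinarith)
    exact ⟨hmono.monotoneOn.isMaxOn_Icc_right,
      fun x hx hx' => hmono.injOn hx (right_mem_Icc.2 hIL.le) hx'⟩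
end

section
/- Let s > γ > 0 and 0 < δ ≤ 1/√(2s). Consider π_L(I_L) = s·(I_F*(I_L))^2 − γ I_L^2 where I_F*(I_L) = I_L for I_L ∈ [δ, 1/√(2s)] and I_F*(I_L) = 1/(2 s I_L) for I_L > 1/√(2s). Then the supremum of π_L over [δ, ∞) equals (s−γ)/(2s) and is attained uniquely at I_L = 1/√(2s). -/
open Set

/-! With `c = 1 / √(2s)`, so that `2 s c² = 1`, the profit is `(s - γ) I²` on `(0, c]`, which is
strictly increasing, while for `I > c` the follower's response `1 / (2 s I) = c² / I` drops below `c`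
and the cost `γ I²` exceeds `γ c²`; so `c` is the unique strict maximiser, with value
`(s - γ) c² = (s - γ) / (2 s)`. -/

lemma one_div_sqrt_two_mul_sq {s : ℝ} (hs : 0 < s) : (1 / √(2 * s)) ^ 2 = 1 / (2 * s) := by
  rw [div_pow, one_pow, Real.sq_sqrt (by positivity)]

lemma sub_mul_sq_lt_sub_mul_sq {s γ I c : ℝ} (hγs : γ < s) (hI : 0 ≤ I) (hIc : I < c) :
    (s - γ) * I ^ 2 < (s - γ) * c ^ 2 :=
  mul_lt_mul_of_pos_left (pow_lt_pow_left₀ hIc hI two_ne_zero) (sub_pos.2 hγs)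

lemma mul_one_div_sq_sub_lt_sub_mul_sq {s γ I c : ℝ} (hγ : 0 < γ) (hc : 0 < c)
    (hsc : 2 * s * c ^ 2 = 1) (hcI : c < I) :
    s * (1 / (2 * s * I)) ^ 2 - γ * I ^ 2 < (s - γ) * c ^ 2 := by
  have hs : 0 < s := by nlinarith [sq_nonneg c]
  have hI : 0 < I := hc.trans hcI
  have hresponse : 1 / (2 * s * I) = c ^ 2 / I := by
    field_simp
    linarith
  have hresponse_lt : c ^ 2 / I < c := by
    rw [div_lt_iff₀ hI]
    nlinarith
  have hresponse_pos : 0 < c ^ 2 / I := by positivity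
  have hrevenue : s * (c ^ 2 / I) ^ 2 < s * c ^ 2 :=
    mul_lt_mul_of_pos_left (pow_lt_pow_left₀ hresponse_lt hresponse_pos.le two_ne_zero) hs
  have hcost : γ * c ^ 2 < γ * I ^ 2 :=
    mul_lt_mul_of_pos_left (pow_lt_pow_left₀ hcI hc.le two_ne_zero) hγ
  rw [hresponse]
  linarith

theorem stmt14 (s γ δ : ℝ) (hsγ : γ < s) (hγ : 0 < γ)
    (hδ : 0 < δ) (hδ2 : δ ≤ 1 / Real.sqrt (2 * s))
    (F πL : ℝ → ℝ)
    (hF : ∀ I, F I = if I ≤ 1 / Real.sqrt (2 * s) then I else 1 / (2 * s * I))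
    (hπ : ∀ I, πL I = s * (F I) ^ 2 - γ * I ^ 2) :
    IsGreatest (πL '' Ici δ) ((s - γ) / (2 * s)) ∧
    πL (1 / Real.sqrt (2 * s)) = (s - γ) / (2 * s) ∧
    (∀ I ∈ Ici δ, πL I = (s - γ) / (2 * s) → I = 1 / Real.sqrt (2 * s)) := by
  set c := 1 / √(2 * s)
  have hs : 0 < s := hγ.trans hsγ
  have hc : 0 < c := by positivity
  have hc2 : c ^ 2 = 1 / (2 * s) := one_div_sqrt_two_mul_sq hs
  have hπc : πL c = (s - γ) / (2 * s) := by
    rw [hπ, hF, if_pos le_rfl, hc2]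
    ring
  have hπ_lt : ∀ I, δ ≤ I → I ≠ c → πL I < πL c := by
    intro I hδI hIc
    rw [hπ, hπ, hF, hF, if_pos le_rfl]
    rcases hIc.lt_or_gt with hlt | hgt
    · rw [if_pos hlt.le, ← sub_mul, ← sub_mul]
      exact sub_mul_sq_lt_sub_mul_sq hsγ (hδ.trans_le hδI).le hlt
    · rw [if_neg hgt.not_ge, ← sub_mul]
      exact mul_one_div_sq_sub_lt_sub_mul_sq hγ hc (by rw [hc2]; field_simp) hgt
  refine ⟨⟨⟨c, hδ2, hπc⟩, ?_⟩, hπc, ?_⟩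
  · rintro _ ⟨I, hI, rfl⟩
    rcases eq_or_ne I c with rfl | hIc
    · exact hπc.le
    · exact hπc ▸ (hπ_lt I hI hIc).le
  · intro I hI hπI
    by_contra hIc
    exact (hπ_lt I hI hIc).ne (hπI.trans hπc.symm)
end
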